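/- Let X be a finite subset of Euclidean space, φ₀, φ₁ : X → ℝ, and ψ : {0,1}^n → ℝ. Then orth(∑_{z ∈ {0,1}^n} ψ(z) · ⊗_{i=1}^{n} φ_{z_i}) ≥ orth(ψ) · orth(φ₁ − φ₀). -/

import Mathlib

/-- Orthogonal content of `φ : X → ℝ` on a finite subset `X` of Euclidean space. -/
noncomputable def orth {σ : Type*} (X : Finset (σ → ℝ)) (φ : (σ → ℝ) → ℝ) : ℕ∞ :=
  ⨅ p ∈ {p : MvPolynomial σ ℝ | ∑ x ∈ X, φ x * MvPolynomial.eval x p ≠ 0},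
    (p.totalDegree : ℕ∞)

/-- Orthogonal content of `ψ : {0,1}^n → ℝ`. -/
noncomputable def orthB {n : ℕ} (ψ : (Fin n → Bool) → ℝ) : ℕ∞ :=
  ⨅ p ∈ {p : MvPolynomial (Fin n) ℝ |
      ∑ z : Fin n → Bool,
        ψ z * MvPolynomial.eval (fun i => if z i then (1 : ℝ) else 0) p ≠ 0},
    (p.totalDegree : ℕ∞)

/-- The `n`-fold Cartesian power `X^n`, viewed as a finite subset of `ℝ^{Fin n × σ}`. -/
noncomputable def powSet {σ : Type*} (n : ℕ) (X : Finset (σ → ℝ)) :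
    Finset (Fin n × σ → ℝ) :=
  letI := Classical.decEq (Fin n × σ → ℝ)
  (Fintype.piFinset fun _ : Fin n => X).image fun g p => g p.1 p.2

open Finset MvPolynomial

lemma orth_le' {σ : Type*} (X : Finset (σ → ℝ)) (φ : (σ → ℝ) → ℝ) (p : MvPolynomial σ ℝ)
    (h : ∑ x ∈ X, φ x * MvPolynomial.eval x p ≠ 0) : orth X φ ≤ p.totalDegree :=
  iInf₂_le p h

lemma orthB_le' {n : ℕ} (ψ : (Fin n → Bool) → ℝ) (p : MvPolynomial (Fin n) ℝ)
    (h : ∑ z : Fin n → Bool,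
        ψ z * MvPolynomial.eval (fun i => if z i then (1 : ℝ) else 0) p ≠ 0) :
    orthB ψ ≤ p.totalDegree :=
  iInf₂_le p h

lemma le_orth' {σ : Type*} (c : ℕ∞) (X : Finset (σ → ℝ)) (φ : (σ → ℝ) → ℝ)
    (h : ∀ p : MvPolynomial σ ℝ, ∑ x ∈ X, φ x * MvPolynomial.eval x p ≠ 0 →
      c ≤ p.totalDegree) : c ≤ orth X φ :=
  le_iInf₂ h

/-- `orth(∑_{z ∈ {0,1}^n} ψ(z) · ⊗ᵢ φ_{zᵢ}) ≥ orth(ψ) · orth(φ₁ − φ₀)`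
(dual block-composition; products in `ℕ∞` with the convention `0·∞ = 0`). -/
theorem stmt_19 {m n : ℕ} (ε : ℝ) (hε0 : 0 < ε) (hε1 : ε < 1)
    (X : Finset (Fin m → ℝ)) (φ₀ φ₁ : (Fin m → ℝ) → ℝ) (ψ : (Fin n → Bool) → ℝ) :
    orthB ψ * orth X (fun x => φ₁ x - φ₀ x) ≤
      orth (powSet n X) fun x =>
        ∑ z : Fin n → Bool,
          ψ z * ∏ i, (if z i then φ₁ else φ₀) fun s => x (i, s) := by
  classical
  set Δ : (Fin m → ℝ) → ℝ := fun x => φ₁ x - φ₀ x with hΔdef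
  refine le_orth' _ _ _ fun P hP => ?_
  set emb : (Fin n → Fin m → ℝ) → (Fin n × Fin m → ℝ) := fun g p => g p.1 p.2 with hemb
  have hinj : Function.Injective emb := by
    intro g g' h
    funext i s
    exact congrFun h (i, s)
  set A : Finset (Fin n) → ℝ := fun S =>
    ∑ z : Fin n → Bool, ψ z * ∏ i ∈ S, (if z i then (1 : ℝ) else 0) with hA
  set B : Finset (Fin n) → ℝ := fun S =>
    ∑ g ∈ Fintype.piFinset (fun _ : Fin n => X),
      (∏ i ∈ S, Δ (g i)) * (∏ i ∈ Sᶜ, φ₀ (g i)) * MvPolynomial.eval (emb g) P with hB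
  have key : ∑ x ∈ powSet n X,
      (∑ z : Fin n → Bool,
        ψ z * ∏ i, (if z i then φ₁ else φ₀) fun s => x (i, s)) * MvPolynomial.eval x P
      = ∑ S : Finset (Fin n), A S * B S := by
    have hprod : ∀ (z : Fin n → Bool) (g : Fin n → Fin m → ℝ),
        (∏ i : Fin n, (if z i then φ₁ else φ₀) (g i))
        = ∑ S : Finset (Fin n),
            ((∏ i ∈ S, (if z i then (1:ℝ) else 0)) * ∏ i ∈ S, Δ (g i)) *
              ∏ i ∈ Sᶜ, φ₀ (g i) := by
      intro z g
      calc ∏ i : Fin n, (if z i then φ₁ else φ₀) (g i)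
          = ∏ i : Fin n, ((if z i then (1:ℝ) else 0) * Δ (g i) + φ₀ (g i)) := by
            refine Finset.prod_congr rfl fun i _ => ?_
            by_cases h : z i <;> simp [h, hΔdef]
        _ = ∑ S ∈ (Finset.univ : Finset (Fin n)).powerset,
              (∏ i ∈ S, (if z i then (1:ℝ) else 0) * Δ (g i)) *
                ∏ i ∈ Finset.univ \ S, φ₀ (g i) := Finset.prod_add _ _ _
        _ = _ := by
            rw [Finset.powerset_univ]
            refine Finset.sum_congr rfl fun S _ => ?_
            rw [Finset.prod_mul_distrib, Finset.compl_eq_univ_sdiff]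
    have himg : ∑ x ∈ powSet n X,
        (∑ z : Fin n → Bool,
          ψ z * ∏ i, (if z i then φ₁ else φ₀) fun s => x (i, s)) * MvPolynomial.eval x P
        = ∑ g ∈ Fintype.piFinset (fun _ : Fin n => X),
          (∑ z : Fin n → Bool,
            ψ z * ∏ i, (if z i then φ₁ else φ₀) (g i)) * MvPolynomial.eval (emb g) P := by
      have hps : powSet n X = Finset.image emb (Fintype.piFinset fun _ : Fin n => X) := by
        rw [powSet, ← hemb]
        congr!
      rw [hps, Finset.sum_image (fun a _ b _ h => hinj h)]
    rw [himg]
    have step1 : ∑ g ∈ Fintype.piFinset (fun _ : Fin n => X),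
        (∑ z : Fin n → Bool,
          ψ z * ∏ i, (if z i then φ₁ else φ₀) (g i)) * MvPolynomial.eval (emb g) P
        = ∑ g ∈ Fintype.piFinset (fun _ : Fin n => X), ∑ z : Fin n → Bool,
            ∑ S : Finset (Fin n),
              (ψ z * ∏ i ∈ S, (if z i then (1:ℝ) else 0)) *
                (((∏ i ∈ S, Δ (g i)) * ∏ i ∈ Sᶜ, φ₀ (g i)) * MvPolynomial.eval (emb g) P) := by
      refine Finset.sum_congr rfl fun g _ => ?_
      rw [Finset.sum_mul]
      refine Finset.sum_congr rfl fun z _ => ?_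
      rw [hprod z g, Finset.mul_sum, Finset.sum_mul]
      refine Finset.sum_congr rfl fun S _ => ?_
      ring
    rw [step1]
    rw [Finset.sum_comm]
    rw [show (∑ z : Fin n → Bool, ∑ g ∈ Fintype.piFinset (fun _ : Fin n => X),
        ∑ S : Finset (Fin n),
          (ψ z * ∏ i ∈ S, (if z i then (1:ℝ) else 0)) *
            (((∏ i ∈ S, Δ (g i)) * ∏ i ∈ Sᶜ, φ₀ (g i)) * MvPolynomial.eval (emb g) P))
        = ∑ z : Fin n → Bool, ∑ S : Finset (Fin n),
            ∑ g ∈ Fintype.piFinset (fun _ : Fin n => X),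
              (ψ z * ∏ i ∈ S, (if z i then (1:ℝ) else 0)) *
                (((∏ i ∈ S, Δ (g i)) * ∏ i ∈ Sᶜ, φ₀ (g i)) * MvPolynomial.eval (emb g) P)
        from Finset.sum_congr rfl fun z _ => Finset.sum_comm]
    rw [Finset.sum_comm]
    refine Finset.sum_congr rfl fun S _ => ?_
    rw [hA, hB]
    rw [Finset.sum_mul_sum]
  rw [key] at hP
  obtain ⟨S, -, hS⟩ := Finset.exists_ne_zero_of_sum_ne_zero hP
  have hAS : A S ≠ 0 := left_ne_zero_of_mul hS
  have hBS : B S ≠ 0 := right_ne_zero_of_mul hS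
  -- Step C : orthB ψ ≤ S.card
  have hC : orthB ψ ≤ (S.card : ℕ∞) := by
    refine le_trans (orthB_le' ψ (∏ i ∈ S, MvPolynomial.X i) ?_) ?_
    · simp only [map_prod, eval_X] at *; simpa using hAS
    · exact_mod_cast Nat.cast_le.mpr <| le_trans (totalDegree_finset_prod _ _)
        (by simp; exact le_rfl)
  -- Step D
  have hBexp : B S = ∑ d ∈ P.support, MvPolynomial.coeff d P *
      ∏ i : Fin n, ∑ x ∈ X,
        (if i ∈ S then Δ x else φ₀ x) * ∏ s : Fin m, x s ^ d (i, s) := by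
    have hw : ∀ g : Fin n → Fin m → ℝ,
        ((∏ i ∈ S, Δ (g i)) * ∏ i ∈ Sᶜ, φ₀ (g i))
          = ∏ i : Fin n, (if i ∈ S then Δ (g i) else φ₀ (g i)) := by
      intro g
      rw [← Finset.prod_mul_prod_compl S (fun i => if i ∈ S then Δ (g i) else φ₀ (g i))]
      congr 1
      · exact Finset.prod_congr rfl fun i hi => (if_pos hi).symm
      · exact Finset.prod_congr rfl fun i hi => (if_neg (Finset.mem_compl.mp hi)).symm
    rw [hB]
    calc ∑ g ∈ Fintype.piFinset (fun _ : Fin n => X),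
          ((∏ i ∈ S, Δ (g i)) * ∏ i ∈ Sᶜ, φ₀ (g i)) * MvPolynomial.eval (emb g) P
        = ∑ g ∈ Fintype.piFinset (fun _ : Fin n => X), ∑ d ∈ P.support,
            MvPolynomial.coeff d P *
              ∏ i : Fin n, ((if i ∈ S then Δ (g i) else φ₀ (g i)) *
                ∏ s : Fin m, g i s ^ d (i, s)) := by
          refine Finset.sum_congr rfl fun g _ => ?_
          rw [MvPolynomial.eval_eq', Finset.mul_sum]
          refine Finset.sum_congr rfl fun d _ => ?_
          rw [Finset.prod_mul_distrib, hw g]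
          have hpp : ∏ p : Fin n × Fin m, emb g p ^ d p
              = ∏ i : Fin n, ∏ s : Fin m, g i s ^ d (i, s) :=
            Fintype.prod_prod_type _
          rw [hpp]
          ring
      _ = ∑ d ∈ P.support, MvPolynomial.coeff d P *
            ∑ g ∈ Fintype.piFinset (fun _ : Fin n => X),
              ∏ i : Fin n, ((if i ∈ S then Δ (g i) else φ₀ (g i)) *
                ∏ s : Fin m, g i s ^ d (i, s)) := by
          rw [Finset.sum_comm]
          exact Finset.sum_congr rfl fun d _ => (Finset.mul_sum _ _ _).symm
      _ = _ := by
          refine Finset.sum_congr rfl fun d _ => ?_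
          exact congrArg (fun r => MvPolynomial.coeff d P * r)
            (Finset.prod_univ_sum (fun _ : Fin n => X)
              (fun i v => (if i ∈ S then Δ v else φ₀ v) *
                ∏ s : Fin m, v s ^ d (i, s))).symm
  rw [hBexp] at hBS
  obtain ⟨d, hd, hdne⟩ := Finset.exists_ne_zero_of_sum_ne_zero hBS
  have hdc : ∀ i : Fin n, (∑ x ∈ X,
      (if i ∈ S then Δ x else φ₀ x) * ∏ s : Fin m, x s ^ d (i, s)) ≠ 0 := by
    intro i
    have := right_ne_zero_of_mul hdne
    exact Finset.prod_ne_zero_iff.mp this i (Finset.mem_univ i)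
  have hDi : ∀ i ∈ S, orth X Δ ≤ ((∑ s : Fin m, d (i, s) : ℕ) : ℕ∞) := by
    intro i hi
    have h1 := hdc i
    simp only [if_pos hi] at h1
    refine le_trans (orth_le' X Δ (∏ s : Fin m, MvPolynomial.X s ^ d (i, s)) ?_) ?_
    · simpa [map_prod] using h1
    · refine Nat.cast_le.mpr <| le_trans (totalDegree_finset_prod _ _) ?_
      refine Finset.sum_le_sum fun s _ => ?_
      simpa using totalDegree_pow (MvPolynomial.X s : MvPolynomial (Fin m) ℝ) (d (i, s))
  -- final chain
  have hdegP : ((∑ i ∈ S, ∑ s : Fin m, d (i, s) : ℕ) : ℕ∞) ≤ (P.totalDegree : ℕ∞) := by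
    refine Nat.cast_le.mpr ?_
    calc ∑ i ∈ S, ∑ s : Fin m, d (i, s)
        ≤ ∑ i : Fin n, ∑ s : Fin m, d (i, s) :=
          Finset.sum_le_sum_of_subset (Finset.subset_univ S)
      _ = ∑ p : Fin n × Fin m, d p := (Fintype.sum_prod_type _).symm
      _ = d.sum fun _ e => e := by
          rw [Finsupp.sum_fintype] ; intro i; rfl
      _ ≤ P.totalDegree := MvPolynomial.le_totalDegree hd
  calc orthB ψ * orth X Δ ≤ (S.card : ℕ∞) * orth X Δ := mul_le_mul_left hC _
    _ = ∑ _i ∈ S, orth X Δ := by rw [Finset.sum_const, nsmul_eq_mul]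
    _ ≤ ∑ i ∈ S, ((∑ s : Fin m, d (i, s) : ℕ) : ℕ∞) := Finset.sum_le_sum hDi
    _ = ((∑ i ∈ S, ∑ s : Fin m, d (i, s) : ℕ) : ℕ∞) := by rw [Nat.cast_sum]
    _ ≤ (P.totalDegree : ℕ∞) := hdegP
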